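/- Let x ∈ S_J (‖x‖_J = 1), let {Iᵢ}_{i∈F} be an x-norming family, and set bᵢ = ∑_{n∈Iᵢ} x(n). Then for every strictly increasing sequence (kᵢ)_{i∈F} in ℕ, the vector y = ∑_{i∈F} bᵢ e_{kᵢ} is an extreme point of B_J. -/

import Mathlib

open Filter Topology Classical

noncomputable section

/-- Admissible finite families of pairwise disjoint, increasingly ordered intervals
`[f i .1, f i .2]` of `ℕ`. -/
def Admissible (n : ℕ) (f : Fin n → ℕ × ℕ) : Prop :=
  (∀ i, (f i).1 ≤ (f i).2) ∧ ∀ i j : Fin n, i < j → (f i).2 < (f j).1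

/-- The set of estimates appearing in the definition of the James norm. -/
def estimates (x : ℕ → ℝ) : Set ℝ :=
  {r | ∃ n, ∃ f : Fin n → ℕ × ℕ, Admissible n f ∧
    r = Real.sqrt (∑ i, (∑ k ∈ Finset.Icc (f i).1 (f i).2, x k) ^ 2)}

/-- `x` belongs to the James space `J`. -/
def MemJ (x : ℕ → ℝ) : Prop := BddAbove (estimates x)

/-- The James norm. -/
def jamesNorm (x : ℕ → ℝ) : ℝ := sSup (estimates x)

/-- The ℓ² norm. -/
def l2Norm (x : ℕ → ℝ) : ℝ := Real.sqrt (∑' k, (x k) ^ 2)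

/-- The closed unit ball of the James space. -/
def ballJ : Set (ℕ → ℝ) := {x | MemJ x ∧ jamesNorm x ≤ 1}

/-- The support of a sequence. -/
def supp (x : ℕ → ℝ) : Set ℕ := {n | x n ≠ 0}

/-- The (possibly infinite) sum of `x` over a subset `I` of `ℕ`,
as the limit of the partial sums. -/
def setSum (x : ℕ → ℝ) (I : Set ℕ) : ℝ :=
  limUnder atTop (fun N => ∑ k ∈ Finset.range N, if k ∈ I then x k else 0)

/-- An `x`-norming family: a (finite or infinite) family of pairwise disjoint
nonempty intervals of `ℕ`, indexed by an initial segment `F` of `ℕ`, ordered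
increasingly, whose interval sums exist and realize the James norm of `x`. -/
structure NormingFamily (x : ℕ → ℝ) where
  F : Set ℕ
  F_nonempty : F.Nonempty
  initial : ∀ ⦃m n : ℕ⦄, m ≤ n → n ∈ F → m ∈ F
  I : ℕ → Set ℕ
  I_nonempty : ∀ i ∈ F, (I i).Nonempty
  I_interval : ∀ i ∈ F, (I i).OrdConnected
  ordered : ∀ i ∈ F, ∀ j ∈ F, i < j → ∀ a ∈ I i, ∀ b ∈ I j, a < b
  sums_exist : ∀ i ∈ F, ∃ l : ℝ,
    Tendsto (fun N => ∑ k ∈ Finset.range N, if k ∈ I i then x k else 0) atTop (𝓝 l)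
  norming : ∑' i : F, (setSum x (I i)) ^ 2 = (jamesNorm x) ^ 2

/-- An `x`-norming partition: an `x`-norming family whose intervals cover the
support of `x`, every interval has its minimum in the support, every non-final
interval has its maximum in the support, and the final interval does not extend
beyond the supremum of the support. -/
structure NormingPartition (x : ℕ → ℝ) extends NormingFamily x where
  covers : supp x ⊆ ⋃ i ∈ F, I i
  min_in_supp : ∀ i ∈ F, ∃ m ∈ I i ∩ supp x, ∀ k ∈ I i, m ≤ k
  max_in_supp : ∀ i ∈ F, (∃ j ∈ F, i < j) → ∃ m ∈ I i ∩ supp x, ∀ k ∈ I i, k ≤ m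
  bounded_by_supp : ∀ i ∈ F, ∀ k ∈ I i, ∃ m ∈ supp x, k ≤ m

/-- `n₁ < n₂` are consecutive elements of the support of `x`. -/
def Consecutive (x : ℕ → ℝ) (n₁ n₂ : ℕ) : Prop :=
  n₁ ∈ supp x ∧ n₂ ∈ supp x ∧ n₁ < n₂ ∧ ∀ k, n₁ < k → k < n₂ → x k = 0

end

/-! An interval of `ℕ` meeting none of the `Iᵢ` has zero `x`-sum: otherwise adjoining it to the
norming family would raise the James norm above `‖x‖_J`. Hence, for consecutive indices
`s ≤ t`, the `x`-sum over the hull of `I_s, …, I_t` is `b_s + ⋯ + b_t`, so every estimate of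
`(bᵢ)` built from blocks of consecutive indices is an estimate of `x` and is at most
`‖x‖_J ^ 2 = 1` (the last interval may be infinite, so one truncates at `N` and lets
`N → ∞`). The estimates of `y`, which spreads `(bᵢ)` along `(kᵢ)`, are of this form, so
`‖y‖_J ≤ 1`, while `‖y‖₂ ^ 2 = ∑ bᵢ ^ 2 = 1`. Such a point is extreme in `B_J`, since
`‖·‖₂ ≤ ‖·‖_J` and the square is strictly convex. -/

open Finset Function

section Estimates

variable {x : ℕ → ℝ}

lemma zero_mem_estimates (x : ℕ → ℝ) : (0 : ℝ) ∈ estimates x :=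
  ⟨0, Fin.elim0, ⟨fun i => i.elim0, fun i => i.elim0⟩, by simp⟩

lemma jamesNorm_nonneg (hx : MemJ x) : 0 ≤ jamesNorm x :=
  le_csSup hx (zero_mem_estimates x)

lemma sqrt_sum_sq_mem_estimates {ι : Type*} [Fintype ι] (g : ι → ℕ × ℕ)
    (hle : ∀ i, (g i).1 ≤ (g i).2)
    (hsep : Pairwise fun i j => (g i).2 < (g j).1 ∨ (g j).2 < (g i).1) :
    √(∑ i, (∑ k ∈ Icc (g i).1 (g i).2, x k) ^ 2) ∈ estimates x := by
  -- enumerate the intervals by increasing left endpoint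
  let e := (Fintype.equivFin ι).symm
  let σ := Tuple.sort fun i => (g (e i)).1
  refine ⟨Fintype.card ι, fun i => g (e (σ i)), ⟨fun i => hle _, fun i j hij => ?_⟩, ?_⟩
  · have hmono := Tuple.monotone_sort (fun i => (g (e i)).1) hij.le
    have hne : e (σ i) ≠ e (σ j) := (σ.trans e).injective.ne hij.ne
    rcases hsep hne with h | h
    · exact h
    · exact absurd (hmono.trans (hle _)) (not_le.2 h)
  · congr 1
    exact ((σ.trans e).sum_comp fun i => (∑ k ∈ Icc (g i).1 (g i).2, x k) ^ 2).symm

lemma sum_sq_le_jamesNorm_sq (hx : MemJ x) {ι : Type*} [Fintype ι] (g : ι → ℕ × ℕ)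
    (hle : ∀ i, (g i).1 ≤ (g i).2)
    (hsep : Pairwise fun i j => (g i).2 < (g j).1 ∨ (g j).2 < (g i).1) :
    ∑ i, (∑ k ∈ Icc (g i).1 (g i).2, x k) ^ 2 ≤ jamesNorm x ^ 2 :=
  (Real.sqrt_le_left (jamesNorm_nonneg hx)).1 (le_csSup hx (sqrt_sum_sq_mem_estimates g hle hsep))

lemma sum_range_sq_le (hx : MemJ x) (N : ℕ) : ∑ k ∈ range N, x k ^ 2 ≤ jamesNorm x ^ 2 := by
  have := sum_sq_le_jamesNorm_sq hx (fun i : Fin N => ((i : ℕ), (i : ℕ))) (fun _ => le_rfl)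
    fun i j hij => lt_or_gt_of_ne (Fin.val_injective.ne hij)
  simpa [Fin.sum_univ_eq_sum_range (fun k => x k ^ 2)] using this

lemma summable_sq (hx : MemJ x) : Summable fun k => x k ^ 2 :=
  summable_of_sum_range_le (fun _ => sq_nonneg _) (sum_range_sq_le hx)

lemma tsum_sq_le (hx : MemJ x) : ∑' k, x k ^ 2 ≤ jamesNorm x ^ 2 :=
  Real.tsum_le_of_sum_range_le (fun _ => sq_nonneg _) (sum_range_sq_le hx)

lemma memJ_and_jamesNorm_le {C : ℝ} (hC : 0 ≤ C)
    (h : ∀ n f, Admissible n f → ∑ i, (∑ k ∈ Icc (f i).1 (f i).2, x k) ^ 2 ≤ C ^ 2) :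
    MemJ x ∧ jamesNorm x ≤ C := by
  have hub : ∀ r ∈ estimates x, r ≤ C := by
    rintro r ⟨n, f, hf, rfl⟩
    exact (Real.sqrt_le_left hC).2 (h n f hf)
  exact ⟨⟨C, hub⟩, csSup_le ⟨0, zero_mem_estimates x⟩ hub⟩

theorem mem_extremePoints_ballJ {y : ℕ → ℝ} (hy : y ∈ ballJ) (hy2 : ∑' m, y m ^ 2 = 1) :
    y ∈ Set.extremePoints ℝ ballJ := by
  refine ⟨hy, ?_⟩
  rintro u ⟨hu, hu1⟩ v ⟨hv, hv1⟩ ⟨a, b, ha, hb, hab, rfl⟩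
  have hU : ∑' m, u m ^ 2 ≤ 1 := (tsum_sq_le hu).trans (by nlinarith [jamesNorm_nonneg hu])
  have hV : ∑' m, v m ^ 2 ≤ 1 := (tsum_sq_le hv).trans (by nlinarith [jamesNorm_nonneg hv])
  obtain rfl : b = 1 - a := by linarith
  -- the defect in the convexity of `t ↦ t ^ 2` is `a (1 - a) (u - v) ^ 2`
  have hsum : HasSum (fun m => a * (1 - a) * (u m - v m) ^ 2)
      (a * ∑' m, u m ^ 2 + (1 - a) * ∑' m, v m ^ 2 - ∑' m, (a • u + (1 - a) • v) m ^ 2) := by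
    have hdefect : (fun m => a * (1 - a) * (u m - v m) ^ 2) = fun m =>
        a * u m ^ 2 + (1 - a) * v m ^ 2 - (a • u + (1 - a) • v) m ^ 2 := by
      funext m
      simp only [Pi.add_apply, Pi.smul_apply, smul_eq_mul]
      ring
    rw [hdefect]
    exact (((summable_sq hu).hasSum.mul_left a).add
      ((summable_sq hv).hasSum.mul_left (1 - a))).sub (summable_sq hy.1).hasSum
  have hnonneg : ∀ m, 0 ≤ a * (1 - a) * (u m - v m) ^ 2 := fun m =>
    mul_nonneg (mul_nonneg ha.le hb.le) (sq_nonneg _)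
  have hzero : a * ∑' m, u m ^ 2 + (1 - a) * ∑' m, v m ^ 2 - ∑' m, (a • u + (1 - a) • v) m ^ 2
      = 0 := le_antisymm (by nlinarith) (hsum.nonneg hnonneg)
  rw [hzero, hasSum_zero_iff_of_nonneg hnonneg] at hsum
  funext m
  have huv : u m = v m := by
    have := (mul_eq_zero.1 (congrFun hsum m)).resolve_left (mul_pos ha hb).ne'
    exact sub_eq_zero.1 (pow_eq_zero_iff two_ne_zero |>.1 this)
  simp only [Pi.add_apply, Pi.smul_apply, smul_eq_mul, ← huv]
  ring

end Estimates

lemma Finset.eq_Icc_min'_max' {α : Type*} [LinearOrder α] [LocallyFiniteOrder α] {s : Finset α}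
    (hs : s.Nonempty) (hconv : (s : Set α).OrdConnected) : s = Icc (s.min' hs) (s.max' hs) := by
  ext i
  refine ⟨fun hi => mem_Icc.2 ⟨s.min'_le i hi, s.le_max' i hi⟩, fun hi => ?_⟩
  exact hconv.out (s.min'_mem hs) (s.max'_mem hs) (mem_Icc.1 hi)

lemma Finset.max'_lt_min'_or_max'_lt_min' {α : Type*} [LinearOrder α] {s t : Finset α}
    (hs : s.Nonempty) (ht : t.Nonempty) (hsc : (s : Set α).OrdConnected)
    (htc : (t : Set α).OrdConnected) (hst : Disjoint s t) :
    s.max' hs < t.min' ht ∨ t.max' ht < s.min' hs := by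
  by_contra! h
  -- the larger of the two minima lies in both sets
  have hmem_s : max (s.min' hs) (t.min' ht) ∈ s := hsc.out (s.min'_mem hs) (s.max'_mem hs)
    ⟨le_max_left _ _, max_le (s.min'_le_max' hs) h.1⟩
  have hmem_t : max (s.min' hs) (t.min' ht) ∈ t := htc.out (t.min'_mem ht) (t.max'_mem ht)
    ⟨le_max_right _ _, max_le h.2 (t.min'_le_max' ht)⟩
  exact disjoint_left.1 hst hmem_s hmem_t

lemma Finset.sum_Icc_add_sum_Icc {M : Type*} [AddCommMonoid M] (f : ℕ → M) {a b c : ℕ}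
    (hab : a ≤ b + 1) (hbc : b ≤ c) :
    ∑ m ∈ Icc a b, f m + ∑ m ∈ Icc (b + 1) c, f m = ∑ m ∈ Icc a c, f m := by
  simp only [← Ico_add_one_right_eq_Icc]
  exact sum_Ico_consecutive f hab (by omega)

namespace NormingFamily

variable {x : ℕ → ℝ} (P : NormingFamily x)

noncomputable section

def partialSum (i N : ℕ) : ℝ := ∑ k ∈ range N, if k ∈ P.I i then x k else 0

def first (i : ℕ) : ℕ := sInf (P.I i)

def lastBelow (i N : ℕ) : ℕ := sSup (P.I i ∩ Set.Iio N)

end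

variable {P} {i j m N : ℕ}

lemma ordConnected_F : P.F.OrdConnected :=
  ⟨fun _ _ _ hb _ hi => P.initial hi.2 hb⟩

lemma tendsto_partialSum (hi : i ∈ P.F) :
    Tendsto (P.partialSum i) atTop (𝓝 (setSum x (P.I i))) := by
  obtain ⟨l, hl⟩ := P.sums_exist i hi
  rwa [setSum, hl.limUnder_eq]

lemma first_mem (hi : i ∈ P.F) : P.first i ∈ P.I i := Nat.sInf_mem (P.I_nonempty i hi)

lemma first_le (hm : m ∈ P.I i) : P.first i ≤ m := Nat.sInf_le hm

lemma lt_first (hi : i ∈ P.F) (hj : j ∈ P.F) (hij : i < j) (hm : m ∈ P.I i) : m < P.first j :=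
  P.ordered i hi j hj hij m hm _ (first_mem hj)

lemma first_le_of_le (hi : i ∈ P.F) (hj : j ∈ P.F) (hji : j ≤ i) (hm : m ∈ P.I i) :
    P.first j ≤ m := by
  rcases hji.lt_or_eq with h | rfl
  · exact (P.ordered j hj i hi h _ (first_mem hj) m hm).le
  · exact first_le hm

lemma lastBelow_mem (hi : i ∈ P.F) (hN : P.first i < N) :
    P.lastBelow i N ∈ P.I i ∧ P.lastBelow i N < N :=
  Nat.sSup_mem (s := P.I i ∩ Set.Iio N) ⟨P.first i, first_mem hi, hN⟩
    (bddAbove_Iio.mono Set.inter_subset_right)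

lemma le_lastBelow (hm : m ∈ P.I i) (hmN : m < N) : m ≤ P.lastBelow i N :=
  le_csSup (bddAbove_Iio.mono Set.inter_subset_right) ⟨hm, hmN⟩

lemma le_lastBelow_of_le (hi : i ∈ P.F) (hj : j ∈ P.F) (hij : i ≤ j) (hm : m ∈ P.I i)
    (hmN : m < N) (hN : P.first j < N) : m ≤ P.lastBelow j N := by
  rcases hij.lt_or_eq with h | rfl
  · exact (lt_first hi hj h hm).le.trans (first_le (lastBelow_mem hj hN).1)
  · exact le_lastBelow hm hmN

lemma partialSum_eq_sum_Icc (hi : i ∈ P.F) (hN : P.first i < N) :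
    P.partialSum i N = ∑ k ∈ Icc (P.first i) (P.lastBelow i N), x k := by
  have hL := lastBelow_mem hi hN
  rw [partialSum, ← sum_filter]
  congr 1
  ext k
  simp only [mem_filter, mem_range, mem_Icc]
  refine ⟨fun ⟨hkN, hk⟩ => ⟨first_le hk, le_lastBelow hk hkN⟩, fun ⟨h1, h2⟩ => ?_⟩
  exact ⟨h2.trans_lt hL.2, (P.I_interval i hi).out (first_mem hi) hL.1 ⟨h1, h2⟩⟩

lemma lastBelow_lt_or_lt_first (hi : i ∈ P.F) (hN : P.first i < N) {a c : ℕ} (hac : a ≤ c)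
    (hgap : ∀ m ∈ Icc a c, m ∉ P.I i) : P.lastBelow i N < a ∨ c < P.first i := by
  by_contra! h
  refine hgap (max a (P.first i)) (mem_Icc.2 ⟨le_max_left _ _, max_le hac h.2⟩) ?_
  exact (P.I_interval i hi).out (first_mem hi) (lastBelow_mem hi hN).1
    ⟨le_max_right _ _, max_le h.1 (le_lastBelow (first_mem hi) hN)⟩

theorem sum_Icc_eq_zero_of_gap (hx : MemJ x) {a c : ℕ}
    (hgap : ∀ i ∈ P.F, ∀ m ∈ Icc a c, m ∉ P.I i) : ∑ m ∈ Icc a c, x m = 0 := by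
  rcases lt_or_ge c a with hca | hac
  · rw [Icc_eq_empty_of_lt hca, sum_empty]
  set g := ∑ m ∈ Icc a c, x m
  have hfin : ∀ s : Finset P.F, ∑ i ∈ s, setSum x (P.I i) ^ 2 ≤ jamesNorm x ^ 2 - g ^ 2 := by
    intro s
    have hlim : Tendsto (fun N => ∑ i ∈ s, P.partialSum i N ^ 2 + g ^ 2) atTop
        (𝓝 (∑ i ∈ s, setSum x (P.I i) ^ 2 + g ^ 2)) :=
      (tendsto_finsetSum _ fun i _ => (tendsto_partialSum i.2).pow 2).add_const _
    suffices ∀ᶠ N in atTop, ∑ i ∈ s, P.partialSum i N ^ 2 + g ^ 2 ≤ jamesNorm x ^ 2 by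
      linarith [le_of_tendsto hlim this]
    filter_upwards [(eventually_all_finset s).2 fun i _ => eventually_gt_atTop (P.first i)]
      with N hN
    let G : Option s → ℕ × ℕ := fun o => o.elim (a, c)
      fun i => (P.first i, P.lastBelow i N)
    have hG := sum_sq_le_jamesNorm_sq hx G
      (fun o => o.rec hac fun i => le_lastBelow (first_mem i.1.2) (hN i i.2)) ?_
    · rw [Fintype.sum_option] at hG
      simp only [G, Option.elim_none, Option.elim_some] at hG
      rw [← sum_coe_sort s]
      simp only [← partialSum_eq_sum_Icc (P := P) (Subtype.prop _) (hN _ (Subtype.prop _))] at hG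
      linarith
    rintro (_ | ⟨i, hi⟩) (_ | ⟨j, hj⟩) hne
    · exact absurd rfl hne
    · exact (lastBelow_lt_or_lt_first j.2 (hN j hj) hac (hgap j j.2)).symm
    · exact lastBelow_lt_or_lt_first i.2 (hN i hi) hac (hgap i i.2)
    · have hij : (i : ℕ) ≠ j := fun h => hne (congrArg some (Subtype.ext (Subtype.ext h)))
      rcases hij.lt_or_gt with h | h
      · exact Or.inl (lt_first i.2 j.2 h (lastBelow_mem i.2 (hN i hi)).1)
      · exact Or.inr (lt_first j.2 i.2 h (lastBelow_mem j.2 (hN j hj)).1)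
  have h := Real.tsum_le_of_sum_le (fun i => sq_nonneg _) hfin
  rw [P.norming] at h
  exact pow_eq_zero_iff two_ne_zero |>.1 (le_antisymm (by linarith) (sq_nonneg g))

theorem sum_Icc_first_lastBelow (hx : MemJ x) {s t : ℕ} (hst : s ≤ t) (ht : t ∈ P.F)
    (hN : P.first t < N) :
    ∑ m ∈ Icc (P.first s) (P.lastBelow t N), x m = ∑ i ∈ Icc s t, P.partialSum i N := by
  induction t, hst using Nat.le_induction with
  | base => rw [Icc_self, sum_singleton, partialSum_eq_sum_Icc ht hN]
  | succ t hst ih =>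
    have htF : t ∈ P.F := P.initial t.le_succ ht
    have hfirst : P.first t < P.first (t + 1) := lt_first htF ht t.lt_succ_self (first_mem htF)
    have hNt : P.first t < N := hfirst.trans hN
    have hLt := lastBelow_mem htF hNt
    have hLt' : P.lastBelow t N < P.first (t + 1) := lt_first htF ht t.lt_succ_self hLt.1
    have hfirst_s : P.first s ≤ P.first t :=
      first_le_of_le htF (P.initial hst htF) hst (first_mem htF)
    have hgap : ∑ m ∈ Icc (P.lastBelow t N + 1) (P.first (t + 1) - 1), x m = 0 := by
      refine sum_Icc_eq_zero_of_gap (P := P) hx fun i hi m hm hmi => ?_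
      rw [mem_Icc] at hm
      rcases le_or_gt i t with hit | hit
      · have := le_lastBelow_of_le hi htF hit hmi (by omega) hNt
        omega
      · have := first_le_of_le hi ht hit hmi
        omega
    have hsplit₁ := sum_Icc_add_sum_Icc x (a := P.first s) (b := P.lastBelow t N)
      (c := P.first (t + 1) - 1) (by have := first_le hLt.1; omega)
      (by omega)
    have hsplit₂ := sum_Icc_add_sum_Icc x (a := P.first s) (b := P.first (t + 1) - 1)
      (c := P.lastBelow (t + 1) N) (by omega) (by have := le_lastBelow (first_mem ht) hN; omega)
    rw [Nat.sub_add_cancel (by omega), ← partialSum_eq_sum_Icc ht hN] at hsplit₂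
    rw [sum_Icc_succ_top (hst.trans t.le_succ), ← ih htF hNt, ← hsplit₂, ← hsplit₁, hgap,
      add_zero]

theorem sum_sq_sum_Icc_setSum_le (hx : MemJ x) {ι : Type*} [Fintype ι] (g : ι → ℕ × ℕ)
    (hle : ∀ j, (g j).1 ≤ (g j).2) (hF : ∀ j, (g j).2 ∈ P.F)
    (hsep : Pairwise fun i j => (g i).2 < (g j).1 ∨ (g j).2 < (g i).1) :
    ∑ j, (∑ i ∈ Icc (g j).1 (g j).2, setSum x (P.I i)) ^ 2 ≤ jamesNorm x ^ 2 := by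
  have hF₁ : ∀ j, (g j).1 ∈ P.F := fun j => P.initial (hle j) (hF j)
  have hlim : Tendsto (fun N => ∑ j, (∑ i ∈ Icc (g j).1 (g j).2, P.partialSum i N) ^ 2) atTop
      (𝓝 (∑ j, (∑ i ∈ Icc (g j).1 (g j).2, setSum x (P.I i)) ^ 2)) :=
    tendsto_finsetSum _ fun j _ => (tendsto_finsetSum _ fun i hi =>
      tendsto_partialSum (P.initial (mem_Icc.1 hi).2 (hF j))).pow 2
  refine le_of_tendsto hlim ?_
  filter_upwards [eventually_all.2 fun j => eventually_gt_atTop (P.first (g j).2)] with N hN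
  have hG := sum_sq_le_jamesNorm_sq hx (fun j => (P.first (g j).1, P.lastBelow (g j).2 N))
    (fun j => (first_le_of_le (hF j) (hF₁ j) (hle j) (first_mem (hF j))).trans
      (le_lastBelow (first_mem (hF j)) (hN j)))
    fun i j hij => (hsep hij).imp
      (fun h => lt_first (hF i) (hF₁ j) h (lastBelow_mem (hF i) (hN i)).1)
      (fun h => lt_first (hF j) (hF₁ i) h (lastBelow_mem (hF j) (hN j)).1)
  simpa only [sum_Icc_first_lastBelow hx (hle _) (hF _) (hN _)] using hG

theorem sum_sq_sum_setSum_le_of_ordConnected (hx : MemJ x) {ι : Type*} [Fintype ι]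
    (T : ι → Finset ℕ) (hTF : ∀ j, ∀ i ∈ T j, i ∈ P.F) (hT : ∀ j, (T j : Set ℕ).OrdConnected)
    (hdisj : Pairwise (Disjoint on T)) :
    ∑ j, (∑ i ∈ T j, setSum x (P.I i)) ^ 2 ≤ jamesNorm x ^ 2 := by
  classical
  have hsub : ∑ j, (∑ i ∈ T j, setSum x (P.I i)) ^ 2 =
      ∑ j : {j // (T j).Nonempty}, (∑ i ∈ T j, setSum x (P.I i)) ^ 2 := by
    rw [← sum_filter_of_ne (p := fun j => (T j).Nonempty) fun j _ h => ?_]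
    · exact sum_subtype _ (fun j => by simp) _
    · by_contra hj
      simp [not_nonempty_iff_eq_empty.1 hj] at h
  rw [hsub]
  have hG := P.sum_sq_sum_Icc_setSum_le (ι := {j // (T j).Nonempty}) hx
    (fun j => ((T j).min' j.2, (T j).max' j.2))
    (fun j => min'_le_max' _ j.2) (fun j => hTF j _ (max'_mem _ j.2))
    fun i j hij => max'_lt_min'_or_max'_lt_min' i.2 j.2 (hT i) (hT j)
      (hdisj (Subtype.coe_ne_coe.2 hij))
  simpa only [← eq_Icc_min'_max' _ (hT _)] using hG

end NormingFamily

section Spreading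

variable {S : Set ℕ} {k : ℕ → ℕ} {y z : ℕ → ℝ}

lemma exists_sum_Icc_eq_sum_of_spread (hk : S.InjOn k) (hy1 : ∀ i ∈ S, y (k i) = z i)
    (hy2 : ∀ n, (∀ i ∈ S, k i ≠ n) → y n = 0) (a c : ℕ) :
    ∃ T : Finset ℕ, (∀ i, i ∈ T ↔ i ∈ S ∧ k i ∈ Set.Icc a c) ∧
      ∑ m ∈ Icc a c, y m = ∑ i ∈ T, z i := by
  have hfin : {i | i ∈ S ∧ k i ∈ Set.Icc a c}.Finite :=
    ((Set.finite_Icc a c).subset (Set.image_subset_iff.2 fun _ hi => hi.2)).of_finite_image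
      (hk.mono fun _ hi => hi.1)
  refine ⟨hfin.toFinset, fun i => hfin.mem_toFinset, ?_⟩
  rw [← sum_subset (s₁ := hfin.toFinset.image k) ?_ ?_, sum_image ?_]
  · exact sum_congr rfl fun i hi => hy1 i (hfin.mem_toFinset.1 hi).1
  · exact fun i hi j hj => hk (hfin.mem_toFinset.1 hi).1 (hfin.mem_toFinset.1 hj).1
  · intro m hm
    obtain ⟨i, hi, rfl⟩ := mem_image.1 hm
    exact mem_Icc.2 (hfin.mem_toFinset.1 hi).2
  · refine fun m hm hmk => hy2 m ?_
    rintro i hi rfl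
    exact hmk (mem_image.2 ⟨i, hfin.mem_toFinset.2 ⟨hi, mem_Icc.1 hm⟩, rfl⟩)

lemma tsum_sq_eq_of_spread (hk : S.InjOn k) (hy1 : ∀ i ∈ S, y (k i) = z i)
    (hy2 : ∀ n, (∀ i ∈ S, k i ≠ n) → y n = 0) : ∑' m, y m ^ 2 = ∑' i : S, z i ^ 2 := by
  have hinj : Injective fun i : S => k i := fun i j h => Subtype.ext (hk i.2 j.2 h)
  rw [← hinj.tsum_eq (f := fun m => y m ^ 2)]
  · exact tsum_congr fun i => by rw [hy1 i i.2]
  · intro m hm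
    by_contra hmk
    exact hm (by simp only [hy2 m fun i hi h => hmk ⟨⟨i, hi⟩, h⟩, zero_pow two_ne_zero])

theorem NormingFamily.sum_sq_sum_Icc_le_of_spread {x : ℕ → ℝ} (P : NormingFamily x)
    (hx : MemJ x) (hk : StrictMonoOn k P.F) (hy1 : ∀ i ∈ P.F, y (k i) = setSum x (P.I i))
    (hy2 : ∀ n, (∀ i ∈ P.F, k i ≠ n) → y n = 0) {n : ℕ} {f : Fin n → ℕ × ℕ}
    (hf : Admissible n f) :
    ∑ j, (∑ m ∈ Icc (f j).1 (f j).2, y m) ^ 2 ≤ jamesNorm x ^ 2 := by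
  choose T hT hsum using fun j => exists_sum_Icc_eq_sum_of_spread hk.injOn hy1 hy2 (f j).1 (f j).2
  simp only [hsum]
  refine P.sum_sq_sum_setSum_le_of_ordConnected hx T (fun j i hi => ((hT j i).1 hi).1)
    (fun j => ⟨fun i₁ hi₁ i₂ hi₂ i hi => ?_⟩) fun j j' hjj' => disjoint_left.2 fun i hi hi' => ?_
  · simp only [mem_coe, hT] at hi₁ hi₂ ⊢
    have hiF := P.ordConnected_F.out hi₁.1 hi₂.1 hi
    exact ⟨hiF, hi₁.2.1.trans (hk.monotoneOn hi₁.1 hiF hi.1),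
      (hk.monotoneOn hiF hi₂.1 hi.2).trans hi₂.2.2⟩
  · obtain ⟨-, hi₁, hi₂⟩ := (hT j i).1 hi
    obtain ⟨-, hi₁', hi₂'⟩ := (hT j' i).1 hi'
    rcases hjj'.lt_or_gt with h | h
    · exact absurd (hf.2 j j' h) (by omega)
    · exact absurd (hf.2 j' j h) (by omega)

end Spreading

theorem stmt13 (x : ℕ → ℝ) (hx : MemJ x) (h1 : jamesNorm x = 1)
    (P : NormingFamily x) (k : ℕ → ℕ) (hk : StrictMonoOn k P.F)
    (y : ℕ → ℝ)
    (hy1 : ∀ i ∈ P.F, y (k i) = setSum x (P.I i))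
    (hy2 : ∀ n : ℕ, (∀ i ∈ P.F, k i ≠ n) → y n = 0) :
    y ∈ Set.extremePoints ℝ ballJ := by
  have hyJ : MemJ y ∧ jamesNorm y ≤ 1 := memJ_and_jamesNorm_le zero_le_one fun n f hf => by
    simpa only [h1] using P.sum_sq_sum_Icc_le_of_spread hx hk hy1 hy2 hf
  refine mem_extremePoints_ballJ hyJ ?_
  rw [tsum_sq_eq_of_spread hk.injOn hy1 hy2, P.norming, h1, one_pow]
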